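/- Fix an n×n Hermitian positive definite complex matrix Y. Then the map X ↦ D_BE(X‖Y) is strictly convex on the set of n×n Hermitian positive definite matrices: for all Hermitian positive definite X_1 ≠ X_2 and every t ∈ (0,1), D_BE(t·X_1 + (1−t)·X_2‖Y) < t·D_BE(X_1‖Y) + (1−t)·D_BE(X_2‖Y). -/

import Mathlib

open Matrix
open scoped ComplexOrder

/-- The scalar bosonic entropy `g(x) = (x+1)·ln(x+1) − x·ln x` (with `g 0 = 0`, since
`Real.log 0 = 0` and `0 * Real.log 0 = 0` in Mathlib). -/
noncomputable def gBE (x : ℝ) : ℝ := (x + 1) * Real.log (x + 1) - x * Real.log x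

/-- The Bose–Einstein entropy of a matrix: the sum of `gBE` over the eigenvalues if the
matrix is Hermitian, and `0` otherwise (junk value). -/
noncomputable def SBE {m : Type*} [Fintype m] [DecidableEq m] (X : Matrix m m ℂ) : ℝ :=
  if h : X.IsHermitian then ∑ j, gBE (h.eigenvalues j) else 0

/-- The matrix logarithm of a Hermitian matrix, via the continuous functional calculus,
i.e. by applying `Real.log` to the eigenvalues in a spectral decomposition
(junk value `0` on non-Hermitian matrices). -/
noncomputable def matLog {m : Type*} [Fintype m] [DecidableEq m]
    (X : Matrix m m ℂ) : Matrix m m ℂ :=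
  if h : X.IsHermitian then
    (h.eigenvectorUnitary : Matrix m m ℂ) *
      Matrix.diagonal (fun i => (Real.log (h.eigenvalues i) : ℂ)) *
      star (h.eigenvectorUnitary : Matrix m m ℂ)
  else 0

/-- The Bose–Einstein relative entropy
`D_BE(X‖Y) = −S_BE(X) + Re Tr[(X+I)·ln(Y+I) − X·ln Y]`. -/
noncomputable def DBE {m : Type*} [Fintype m] [DecidableEq m] (X Y : Matrix m m ℂ) : ℝ :=
  -SBE X + (Matrix.trace ((X + 1) * matLog (Y + 1) - X * matLog Y)).re

noncomputable def gBE' (x : ℝ) : ℝ := Real.log (x + 1) - Real.log x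

lemma hasDerivAt_gBE {x : ℝ} (hx : 0 < x) : HasDerivAt gBE (gBE' x) x := by
  have hx1 : x + 1 ≠ 0 := by positivity
  have h1 : HasDerivAt (fun y : ℝ => (y + 1) * Real.log (y + 1))
      (1 * Real.log (x + 1) + (x + 1) * ((x + 1)⁻¹ * 1)) x :=
    ((hasDerivAt_id x).add_const 1).mul
      (by have := (Real.hasDerivAt_log hx1).comp x ((hasDerivAt_id x).add_const 1); exact this)
  have h2 : HasDerivAt (fun y : ℝ => y * Real.log y)
      (1 * Real.log x + x * x⁻¹) x := by
    exact (hasDerivAt_id' x).mul (Real.hasDerivAt_log hx.ne')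
  have : HasDerivAt gBE (1 * Real.log (x + 1) + (x + 1) * ((x + 1)⁻¹ * 1) - (1 * Real.log x + x * x⁻¹)) x := h1.sub h2
  convert this using 1
  field_simp [gBE']
  unfold gBE'; ring

lemma gBE'_strictAnti {x y : ℝ} (hx : 0 < x) (hxy : x < y) : gBE' y < gBE' x := by
  have hy : 0 < y := hx.trans hxy
  have h : Real.log ((y + 1) * x) < Real.log ((x + 1) * y) :=
    Real.log_lt_log (by positivity) (by nlinarith)
  rw [Real.log_mul (by positivity) hx.ne', Real.log_mul (by positivity) hy.ne'] at h
  unfold gBE'; linarith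

lemma gBE_tangent_lt {a b : ℝ} (ha : 0 < a) (hb : 0 < b) (hab : a ≠ b) :
    gBE a < gBE b + (a - b) * gBE' b := by
  rcases lt_or_gt_of_ne hab with h | h
  · obtain ⟨c, hc, hc'⟩ := exists_hasDerivAt_eq_slope gBE gBE' h
      (fun x hx => (hasDerivAt_gBE (lt_of_lt_of_le ha hx.1)).continuousAt.continuousWithinAt)
      (fun x hx => hasDerivAt_gBE (ha.trans hx.1))
    have hgc : gBE' b < gBE' c := gBE'_strictAnti (ha.trans hc.1) hc.2
    have hba : 0 < b - a := by linarith
    have : gBE' b < (gBE b - gBE a) / (b - a) := by rw [← hc']; exact hgc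
    rw [lt_div_iff₀ hba] at this
    nlinarith
  · obtain ⟨c, hc, hc'⟩ := exists_hasDerivAt_eq_slope gBE gBE' h
      (fun x hx => (hasDerivAt_gBE (lt_of_lt_of_le hb hx.1)).continuousAt.continuousWithinAt)
      (fun x hx => hasDerivAt_gBE (hb.trans hx.1))
    have hgc : gBE' c < gBE' b := gBE'_strictAnti hb hc.1
    have hba : 0 < a - b := by linarith
    have : (gBE a - gBE b) / (a - b) < gBE' b := by rw [← hc']; exact hgc
    rw [div_lt_iff₀ hba] at this
    nlinarith

lemma gBE_tangent_le {a b : ℝ} (ha : 0 < a) (hb : 0 < b) :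
    gBE a ≤ gBE b + (a - b) * gBE' b := by
  rcases eq_or_ne a b with rfl | h
  · simp
  · exact (gBE_tangent_lt ha hb h).le

lemma trace_mul_unitary_diag {n : ℕ} (A U : Matrix (Fin n) (Fin n) ℂ) (c : Fin n → ℂ) :
    Matrix.trace (A * (U * Matrix.diagonal c * star U)) = ∑ i, (star U * A * U) i i * c i := by
  have h1 : A * (U * Matrix.diagonal c * star U) = (A * U * Matrix.diagonal c) * star U := by
    noncomm_ring
  have h2 : star U * (A * U * Matrix.diagonal c) = (star U * A * U) * Matrix.diagonal c := by
    noncomm_ring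
  rw [h1, Matrix.trace_mul_comm, h2, Matrix.trace]
  simp [Matrix.mul_diagonal, Matrix.diag]

lemma conj_diag_apply {n : ℕ} (W : Matrix (Fin n) (Fin n) ℂ) (d : Fin n → ℂ) (i k : Fin n) :
    (W * Matrix.diagonal d * star W) i k = ∑ j, W i j * d j * star (W k j) := by
  rw [Matrix.mul_apply]
  refine Finset.sum_congr rfl fun j _ => ?_
  rw [Matrix.mul_diagonal, Matrix.star_apply]

lemma klein_strict {n : ℕ} {X Z : Matrix (Fin n) (Fin n) ℂ} (hX : X.PosDef) (hZ : Z.PosDef)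
    (hXZ : X ≠ Z) :
    SBE X < SBE Z + (Matrix.trace ((X - Z) *
      ((hZ.1.eigenvectorUnitary : Matrix (Fin n) (Fin n) ℂ) *
        Matrix.diagonal (fun i => (gBE' (hZ.1.eigenvalues i) : ℂ)) *
        star (hZ.1.eigenvectorUnitary : Matrix (Fin n) (Fin n) ℂ)))).re := by
  set U : Matrix (Fin n) (Fin n) ℂ := (hZ.1.eigenvectorUnitary : Matrix (Fin n) (Fin n) ℂ)
    with hUdef
  set V : Matrix (Fin n) (Fin n) ℂ := (hX.1.eigenvectorUnitary : Matrix (Fin n) (Fin n) ℂ)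
    with hVdef
  set μ := hX.1.eigenvalues with hμdef
  set ν := hZ.1.eigenvalues with hνdef
  set W := star U * V with hWdef
  set p : Fin n → Fin n → ℝ := fun i j => Complex.normSq (W i j) with hpdef
  have hμpos : ∀ j, 0 < μ j := hX.eigenvalues_pos
  have hνpos : ∀ i, 0 < ν i := hZ.eigenvalues_pos
  have hUU : star U * U = 1 := Matrix.mem_unitaryGroup_iff'.mp (hZ.1.eigenvectorUnitary).2
  have hUU' : U * star U = 1 := Matrix.mem_unitaryGroup_iff.mp (hZ.1.eigenvectorUnitary).2
  have hVV : star V * V = 1 := Matrix.mem_unitaryGroup_iff'.mp (hX.1.eigenvectorUnitary).2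
  have hVV' : V * star V = 1 := Matrix.mem_unitaryGroup_iff.mp (hX.1.eigenvectorUnitary).2
  have hWstar : star W = star V * U := by rw [hWdef, Matrix.star_mul, star_star]
  have hWW : W * star W = 1 := by
    rw [hWdef, hWstar]
    calc star U * V * (star V * U) = star U * (V * star V) * U := by noncomm_ring
    _ = 1 := by rw [hVV', Matrix.mul_one, hUU]
  have hWW' : star W * W = 1 := by
    rw [hWdef, hWstar]
    calc star V * U * (star U * V) = star V * (U * star U) * V := by noncomm_ring
    _ = 1 := by rw [hUU', Matrix.mul_one, hVV]
  have hprow : ∀ i, ∑ j, p i j = 1 := by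
    intro i
    have h : (W * star W) i i = (1 : Matrix (Fin n) (Fin n) ℂ) i i := by rw [hWW]
    rw [Matrix.mul_apply, Matrix.one_apply_eq] at h
    have h2 : ∀ j, W i j * (star W) j i = ((p i j : ℝ) : ℂ) := by
      intro j
      simp [Matrix.star_apply, Complex.star_def, Complex.mul_conj, hpdef]
    rw [Finset.sum_congr rfl (fun j _ => h2 j)] at h
    exact_mod_cast h
  have hpcol : ∀ j, ∑ i, p i j = 1 := by
    intro j
    have h : (star W * W) j j = (1 : Matrix (Fin n) (Fin n) ℂ) j j := by rw [hWW']
    rw [Matrix.mul_apply, Matrix.one_apply_eq] at h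
    have h2 : ∀ i, (star W) j i * W i j = ((p i j : ℝ) : ℂ) := by
      intro i
      rw [Matrix.star_apply, mul_comm]
      simp [Complex.star_def, Complex.mul_conj, hpdef]
    rw [Finset.sum_congr rfl (fun i _ => h2 i)] at h
    exact_mod_cast h
  have hspecZ : star U * Z * U = Matrix.diagonal (fun i => ((ν i : ℝ) : ℂ)) :=
    by simpa [Unitary.conjStarAlgAut_apply, Function.comp_def] using hZ.1.conjStarAlgAut_star_eigenvectorUnitary
  have hXs : X = V * Matrix.diagonal (fun j => ((μ j : ℝ) : ℂ)) * star V := by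
    simpa [Unitary.conjStarAlgAut_apply, Function.comp_def] using hX.1.spectral_theorem
  have hZs : Z = U * Matrix.diagonal (fun i => ((ν i : ℝ) : ℂ)) * star U := by
    simpa [Unitary.conjStarAlgAut_apply, Function.comp_def] using hZ.1.spectral_theorem
  have hMX : star U * X * U = W * Matrix.diagonal (fun j => ((μ j : ℝ) : ℂ)) * star W := by
    rw [hWstar, hWdef]
    conv_lhs => rw [hXs]
    noncomm_ring
  have hdiagX : ∀ i k, (star U * X * U) i k
      = ∑ j, W i j * ((μ j : ℝ) : ℂ) * star (W k j) := by
    intro i k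
    rw [hMX, conj_diag_apply]
  -- trace formulas
  have htrX : (Matrix.trace (X * (U * Matrix.diagonal (fun i => ((gBE' (ν i) : ℝ) : ℂ)) * star U))).re
      = ∑ i, ∑ j, p i j * μ j * gBE' (ν i) := by
    rw [trace_mul_unitary_diag]
    have h3 : ∀ i, (star U * X * U) i i * ((gBE' (ν i) : ℝ) : ℂ)
        = ((∑ j, p i j * μ j * gBE' (ν i) : ℝ) : ℂ) := by
      intro i
      rw [hdiagX i i]
      push_cast
      rw [Finset.sum_mul]
      refine Finset.sum_congr rfl fun j _ => ?_
      have hc : W i j * star (W i j) = ((p i j : ℝ) : ℂ) := by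
        simp [Complex.star_def, Complex.mul_conj, hpdef]
      calc W i j * ((μ j : ℝ) : ℂ) * star (W i j) * ((gBE' (ν i) : ℝ) : ℂ)
          = (W i j * star (W i j)) * ((μ j : ℝ) : ℂ) * ((gBE' (ν i) : ℝ) : ℂ) := by ring
        _ = ((p i j : ℝ) : ℂ) * ((μ j : ℝ) : ℂ) * ((gBE' (ν i) : ℝ) : ℂ) := by rw [hc]
    rw [Finset.sum_congr rfl (fun i _ => h3 i), ← Complex.ofReal_sum]
    exact Complex.ofReal_re _
  have htrZ : (Matrix.trace (Z * (U * Matrix.diagonal (fun i => ((gBE' (ν i) : ℝ) : ℂ)) * star U))).re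
      = ∑ i, ν i * gBE' (ν i) := by
    rw [trace_mul_unitary_diag]
    have h3 : ∀ i, (star U * Z * U) i i * ((gBE' (ν i) : ℝ) : ℂ)
        = ((ν i * gBE' (ν i) : ℝ) : ℂ) := by
      intro i
      rw [hspecZ]
      simp [Matrix.diagonal_apply_eq, Function.comp]
    rw [Finset.sum_congr rfl (fun i _ => h3 i), ← Complex.ofReal_sum]
    exact Complex.ofReal_re _
  -- equality case
  have heqcase : (∀ i j, p i j ≠ 0 → μ j = ν i) → X = Z := by
    intro hcond
    have hsumWW : ∀ i k, ∑ j, W i j * star (W k j) = (1 : Matrix (Fin n) (Fin n) ℂ) i k := by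
      intro i k
      rw [← hWW, Matrix.mul_apply]
      simp [Matrix.star_apply]
    have hkey : W * Matrix.diagonal (fun j => ((μ j : ℝ) : ℂ)) * star W
        = Matrix.diagonal (fun i => ((ν i : ℝ) : ℂ)) := by
      ext i k
      have hterm : ∀ j, W i j * ((μ j : ℝ) : ℂ) * star (W k j)
          = ((ν i : ℝ) : ℂ) * (W i j * star (W k j)) := by
        intro j
        by_cases h : W i j = 0
        · simp [h]
        · rw [hcond i j (fun hp => h (Complex.normSq_eq_zero.mp hp))]
          ring
      rw [conj_diag_apply, Finset.sum_congr rfl (fun j _ => hterm j), ← Finset.mul_sum,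
        hsumWW]
      by_cases hik : i = k
      · subst hik; simp
      · simp [Matrix.one_apply_ne hik, Matrix.diagonal_apply_ne _ hik]
    have hVW : V = U * W := by rw [hWdef, ← Matrix.mul_assoc, hUU', Matrix.one_mul]
    rw [hXs, hZs, hVW, ← hkey, Matrix.star_mul]
    noncomm_ring
  have hwit : ∃ i j, p i j ≠ 0 ∧ μ j ≠ ν i := by
    by_contra h
    push_neg at h
    exact hXZ (heqcase fun i j hp => (h i j hp))
  -- assemble
  rw [Matrix.sub_mul, Matrix.trace_sub, Complex.sub_re]
  rw [SBE, SBE, dif_pos hX.1, dif_pos hZ.1]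
  rw [htrX, htrZ]
  have hL : ∑ j, gBE (μ j) = ∑ i, ∑ j, p i j * gBE (μ j) := by
    rw [Finset.sum_comm]
    refine Finset.sum_congr rfl fun j _ => ?_
    rw [← Finset.sum_mul, hpcol j, one_mul]
  have hE1 : ∑ i, gBE (ν i) = ∑ i, ∑ j, p i j * gBE (ν i) := by
    refine Finset.sum_congr rfl fun i _ => ?_
    rw [← Finset.sum_mul, hprow i, one_mul]
  have hE2 : ∑ i, ν i * gBE' (ν i) = ∑ i, ∑ j, p i j * (ν i * gBE' (ν i)) := by
    refine Finset.sum_congr rfl fun i _ => ?_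
    rw [← Finset.sum_mul, hprow i, one_mul]
  have hsum : ∑ i, ∑ j, p i j * gBE (μ j)
      < ∑ i, ∑ j, p i j * (gBE (ν i) + (μ j - ν i) * gBE' (ν i)) := by
    rw [← Finset.sum_product', ← Finset.sum_product']
    obtain ⟨i0, j0, hp0, hne0⟩ := hwit
    refine Finset.sum_lt_sum (fun x _ => ?_) ⟨(i0, j0), Finset.mem_univ _, ?_⟩
    · exact mul_le_mul_of_nonneg_left (gBE_tangent_le (hμpos _) (hνpos _))
        (Complex.normSq_nonneg _)
    · exact mul_lt_mul_of_pos_left (gBE_tangent_lt (hμpos _) (hνpos _) hne0)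
        ((Complex.normSq_nonneg _).lt_of_ne (Ne.symm hp0))
  have hexp : ∑ i, ∑ j, p i j * (gBE (ν i) + (μ j - ν i) * gBE' (ν i))
      = (∑ i, ∑ j, p i j * gBE (ν i))
        + ((∑ i, ∑ j, p i j * μ j * gBE' (ν i)) - ∑ i, ∑ j, p i j * (ν i * gBE' (ν i))) := by
    have h4 : ∀ i j, p i j * (gBE (ν i) + (μ j - ν i) * gBE' (ν i))
        = p i j * gBE (ν i) + (p i j * μ j * gBE' (ν i) - p i j * (ν i * gBE' (ν i))) :=
      fun i j => by ring
    simp only [h4, Finset.sum_add_distrib, Finset.sum_sub_distrib]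
  linarith [hL, hE1, hE2, hsum, hexp]

lemma posDef_ofReal_smul {n : ℕ} {X : Matrix (Fin n) (Fin n) ℂ} (hX : X.PosDef) {t : ℝ}
    (ht : 0 < t) : (((t : ℝ) : ℂ) • X).PosDef := by
  constructor
  · have : (((t : ℝ) : ℂ) • X)ᴴ = star ((t : ℝ) : ℂ) • Xᴴ := Matrix.conjTranspose_smul _ _
    rw [Matrix.IsHermitian, this, Complex.star_def, Complex.conj_ofReal, hX.1]
  · intro x hx
    exact (hX.smul (Complex.zero_lt_real.mpr ht)).2 hx

/-- **strict convexity in the first argument, Proposition 16.** Fix a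
Hermitian positive definite `Y`.  For Hermitian positive definite `X₁ ≠ X₂` and
`t ∈ (0,1)`, `D_BE(t·X₁ + (1−t)·X₂‖Y) < t·D_BE(X₁‖Y) + (1−t)·D_BE(X₂‖Y)`. -/
theorem stmt_15 {n : ℕ} (Y : Matrix (Fin n) (Fin n) ℂ) (hY : Y.PosDef)
    (X₁ X₂ : Matrix (Fin n) (Fin n) ℂ) (hX₁ : X₁.PosDef) (hX₂ : X₂.PosDef)
    (hne : X₁ ≠ X₂) (t : ℝ) (ht0 : 0 < t) (ht1 : t < 1) :
    DBE (t • X₁ + (1 - t) • X₂) Y < t * DBE X₁ Y + (1 - t) * DBE X₂ Y := by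
  have hre : ∀ (r : ℝ) (M : Matrix (Fin n) (Fin n) ℂ), r • M = ((r : ℝ) : ℂ) • M := by
    intro r M; ext i j; simp [Matrix.smul_apply, Complex.real_smul]
  rw [hre, hre, show ((1 - t : ℝ) : ℂ) = 1 - (t : ℂ) by push_cast; ring]
  set Z := (t : ℂ) • X₁ + (1 - (t : ℂ)) • X₂ with hZdef
  have ht1' : 0 < 1 - t := by linarith
  have h1t : ((1 - t : ℝ) : ℂ) = 1 - (t : ℂ) := by push_cast; ring
  have hZpd : Z.PosDef := by
    rw [hZdef, ← h1t]
    exact (posDef_ofReal_smul hX₁ ht0).add (posDef_ofReal_smul hX₂ ht1')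
  -- X₁ ≠ Z and X₂ ≠ Z
  have hX1Z : X₁ ≠ Z := by
    intro h
    apply hne
    have hc : (1 - (t : ℂ)) ≠ 0 := by
      rw [← h1t]
      exact Complex.ofReal_ne_zero.mpr (by linarith)
    apply smul_right_injective (Matrix (Fin n) (Fin n) ℂ) hc
    have h2 : X₁ = (t : ℂ) • X₁ + (1 - (t : ℂ)) • X₂ := h.trans hZdef
    linear_combination (norm := module) h2
  have hX2Z : X₂ ≠ Z := by
    intro h
    apply hne
    have hc : (t : ℂ) ≠ 0 := Complex.ofReal_ne_zero.mpr (by linarith)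
    apply smul_right_injective (Matrix (Fin n) (Fin n) ℂ) hc
    have h2 : X₂ = (t : ℂ) • X₁ + (1 - (t : ℂ)) • X₂ := h.trans hZdef
    linear_combination (norm := module) (-h2)
  -- the tangent matrix
  set G : Matrix (Fin n) (Fin n) ℂ :=
    (hZpd.1.eigenvectorUnitary : Matrix (Fin n) (Fin n) ℂ) *
      Matrix.diagonal (fun i => (gBE' (hZpd.1.eigenvalues i) : ℂ)) *
      star (hZpd.1.eigenvectorUnitary : Matrix (Fin n) (Fin n) ℂ) with hGdef
  have hk1 : SBE X₁ < SBE Z + (Matrix.trace ((X₁ - Z) * G)).re := klein_strict hX₁ hZpd hX1Z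
  have hk2 : SBE X₂ < SBE Z + (Matrix.trace ((X₂ - Z) * G)).re := klein_strict hX₂ hZpd hX2Z
  have hcomb : t * (Matrix.trace ((X₁ - Z) * G)).re
      + (1 - t) * (Matrix.trace ((X₂ - Z) * G)).re = 0 := by
    have h0 : (t : ℂ) • ((X₁ - Z) * G) + (1 - (t : ℂ)) • ((X₂ - Z) * G) = 0 := by
      rw [← Matrix.smul_mul, ← Matrix.smul_mul, ← Matrix.add_mul]
      have h00 : (t : ℂ) • (X₁ - Z) + (1 - (t : ℂ)) • (X₂ - Z) = 0 := by
        rw [hZdef]; module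
      rw [h00, Matrix.zero_mul]
    have h1 := congrArg (fun M => (Matrix.trace M).re) h0
    simp only [Matrix.trace_add, Matrix.trace_smul, Matrix.trace_zero, Complex.add_re,
      smul_eq_mul, Complex.zero_re] at h1
    rw [Complex.re_ofReal_mul] at h1
    have h2 : ((1 - (t : ℂ)) * Matrix.trace ((X₂ - Z) * G)).re
        = (1 - t) * (Matrix.trace ((X₂ - Z) * G)).re := by
      rw [← h1t, Complex.re_ofReal_mul]
    rw [h2] at h1
    linarith
  -- strict concavity of SBE
  have hS : t * SBE X₁ + (1 - t) * SBE X₂ < SBE Z := by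
    have h1 := mul_lt_mul_of_pos_left hk1 ht0
    have h2 := mul_lt_mul_of_pos_left hk2 ht1'
    nlinarith [hcomb]
  -- linearity of the trace part
  have hone : Z + 1 = (t : ℂ) • (X₁ + 1) + (1 - (t : ℂ)) • (X₂ + 1) := by
    rw [hZdef]; module
  have htr : (Matrix.trace ((Z + 1) * matLog (Y + 1) - Z * matLog Y)).re
      = t * (Matrix.trace ((X₁ + 1) * matLog (Y + 1) - X₁ * matLog Y)).re
        + (1 - t) * (Matrix.trace ((X₂ + 1) * matLog (Y + 1) - X₂ * matLog Y)).re := by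
    have hmat : (Z + 1) * matLog (Y + 1) - Z * matLog Y
        = (t : ℂ) • ((X₁ + 1) * matLog (Y + 1) - X₁ * matLog Y)
          + (1 - (t : ℂ)) • ((X₂ + 1) * matLog (Y + 1) - X₂ * matLog Y) := by
      rw [hone, hZdef]
      rw [Matrix.add_mul, Matrix.add_mul, Matrix.smul_mul, Matrix.smul_mul, Matrix.smul_mul,
        Matrix.smul_mul]
      module
    rw [hmat]
    simp only [Matrix.trace_add, Matrix.trace_smul, Complex.add_re, smul_eq_mul]
    rw [Complex.re_ofReal_mul, ← h1t, Complex.re_ofReal_mul]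
  simp only [DBE]
  rw [htr]
  linarith
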